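/- Let N ≥ 1 and let u : ℝ^N → ℝ be a C², ℤ^N-periodic function such that det A[u](x) > 0 for every x ∈ ℝ^N. Then A[u](x) is positive definite for every x ∈ ℝ^N; that is, u is admissible. -/

import Mathlib

/-!
A continuous `ℤ^N`-periodic function attains a global maximum `x₀`. There `∇u = 0` and
`Hess u ≤ 0` (second derivative test along lines), so `A[u](x₀) = I - Hess u(x₀)` is positive
definite. On the connected space `ℝ^N`, the set where the continuous symmetric family `A[u]` is
positive definite is open, since positivity on the compact unit sphere persists, and closed, since
a nonsingular positive semidefinite matrix is positive definite. Hence it is everything.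
-/

open Matrix Real

/-- The `i`-th partial derivative (gradient component) of `u` at `x`. -/
noncomputable def grad {N : ℕ} (u : (Fin N → ℝ) → ℝ) (x : Fin N → ℝ) (i : Fin N) : ℝ :=
  fderiv ℝ u x (Pi.single i 1)

/-- The `(i,j)` entry of the Hessian matrix of `u` at `x`. -/
noncomputable def hess {N : ℕ} (u : (Fin N → ℝ) → ℝ) (x : Fin N → ℝ) (i j : Fin N) : ℝ :=
  fderiv ℝ (fun y => fderiv ℝ u y (Pi.single j 1)) x (Pi.single i 1)

/-- The squared norm of the gradient of `u` at `x`. -/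
noncomputable def gradSq {N : ℕ} (u : (Fin N → ℝ) → ℝ) (x : Fin N → ℝ) : ℝ :=
  ∑ i, (grad u x i) ^ 2

/-- The Laplacian of `u` at `x` (trace of the Hessian). -/
noncomputable def lap {N : ℕ} (u : (Fin N → ℝ) → ℝ) (x : Fin N → ℝ) : ℝ :=
  ∑ i, hess u x i i

/-- The matrix `A[u](x) = I + ∇u(x) (∇u(x))ᵀ − Hess u(x)`. -/
noncomputable def amat {N : ℕ} (u : (Fin N → ℝ) → ℝ) (x : Fin N → ℝ) :
    Matrix (Fin N) (Fin N) ℝ :=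
  1 + Matrix.of (fun i j => grad u x i * grad u x j) - Matrix.of (fun i j => hess u x i j)

/-- `u` is `ℤ^N`-periodic. -/
def ZPeriodic {N : ℕ} (u : (Fin N → ℝ) → ℝ) : Prop :=
  ∀ (x : Fin N → ℝ) (k : Fin N → ℤ), u (x + fun i => (k i : ℝ)) = u x

/-- `u` is admissible: `A[u](x)` is positive definite for every `x`. -/
def Admissible {N : ℕ} (u : (Fin N → ℝ) → ℝ) : Prop :=
  ∀ x, (amat u x).PosDef

open Topology Filter

section SecondDerivative

theorem IsLocalMax.deriv_deriv_nonpos {g : ℝ → ℝ} {a : ℝ} (h : IsLocalMax g a)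
    (hc : ContinuousAt g a) : deriv (deriv g) a ≤ 0 := by
  by_contra! hpos
  -- the second derivative test would make `a` a local minimum too, so `g` is locally constant
  have hconst : g =ᶠ[𝓝 a] fun _ => g a := by
    filter_upwards [h, isLocalMin_of_deriv_deriv_pos hpos h.deriv_eq_zero hc] with x hmax hmin
    exact le_antisymm hmax hmin
  have : deriv (deriv g) a = 0 := by simp [hconst.deriv.deriv_eq]
  exact hpos.ne' this

variable {E : Type*} [NormedAddCommGroup E] [NormedSpace ℝ E] {u : E → ℝ} {x₀ : E}

theorem IsLocalMax.fderiv_fderiv_apply_self_nonpos (h : IsLocalMax u x₀)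
    (hu : Differentiable ℝ u) (hu' : DifferentiableAt ℝ (fderiv ℝ u) x₀) (v : E) :
    fderiv ℝ (fderiv ℝ u) x₀ v v ≤ 0 := by
  let γ : ℝ → E := fun t => x₀ + t • v
  have hγ : ∀ t, HasDerivAt γ v t := fun t =>
    (((hasDerivAt_id t).smul_const v).const_add x₀).congr_deriv (one_smul ℝ v)
  have hγ0 : γ 0 = x₀ := by simp [γ]
  have hderiv : deriv (u ∘ γ) = fun t => fderiv ℝ u (γ t) v :=
    funext fun t => ((hu _).hasFDerivAt.comp_hasDerivAt t (hγ t)).deriv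
  have hderiv2 : HasDerivAt (fun t => fderiv ℝ u (γ t) v) (fderiv ℝ (fderiv ℝ u) x₀ v v) 0 :=
    ((ContinuousLinearMap.apply ℝ ℝ v).hasFDerivAt.comp x₀ hu'.hasFDerivAt).comp_hasDerivAt_of_eq
      0 (hγ 0) hγ0.symm
  have hmax : IsLocalMax (u ∘ γ) 0 := (hγ0 ▸ h).comp_continuous (hγ 0).continuousAt
  simpa [hderiv, hderiv2.deriv] using
    hmax.deriv_deriv_nonpos ((hu _).continuousAt.comp (hγ 0).continuousAt)

end SecondDerivative

section MatrixFamily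

variable {X n : Type*} [TopologicalSpace X] [Fintype n] {M : X → Matrix n n ℝ}

theorem Continuous.eventually_posDef (hM : Continuous M) (hherm : ∀ x, (M x).IsHermitian)
    {x₀ : X} (h₀ : (M x₀).PosDef) : ∀ᶠ x in 𝓝 x₀, (M x).PosDef := by
  have hQ : Continuous fun z : X × (n → ℝ) => z.2 ⬝ᵥ M z.1 *ᵥ z.2 :=
    continuous_snd.dotProduct ((hM.comp continuous_fst).matrix_mulVec continuous_snd)
  have hsphere : ∀ᶠ x in 𝓝 x₀, ∀ w ∈ Metric.sphere (0 : n → ℝ) 1, 0 < w ⬝ᵥ M x *ᵥ w := by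
    refine (isCompact_sphere 0 1).eventually_forall_of_forall_eventually fun w hw => ?_
    have hw₀ : 0 < w ⬝ᵥ M x₀ *ᵥ w := by
      simpa using h₀.dotProduct_mulVec_pos (ne_zero_of_mem_sphere one_ne_zero ⟨w, hw⟩)
    exact hQ.continuousAt.eventually (lt_mem_nhds hw₀)
  filter_upwards [hsphere] with x hx
  refine .of_dotProduct_mulVec_pos (hherm x) fun v hv => ?_
  have hvw := hx (‖v‖⁻¹ • v) (by simp [norm_smul, hv])
  have hc : 0 < ‖v‖⁻¹ := by positivity
  simpa [mulVec_smul, hc] using hvw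

theorem Continuous.posDef_of_det_ne_zero [PreconnectedSpace X] [DecidableEq n]
    (hM : Continuous M) (hherm : ∀ x, (M x).IsHermitian) (hdet : ∀ x, (M x).det ≠ 0)
    {x₀ : X} (h₀ : (M x₀).PosDef) (x : X) : (M x).PosDef := by
  have hset : {x | (M x).PosDef} = ⋂ v, {x | 0 ≤ v ⬝ᵥ M x *ᵥ v} := by
    ext x
    simp only [Set.mem_ofPred_eq, Set.mem_iInter]
    refine ⟨fun h v => by simpa using h.posSemidef.dotProduct_mulVec_nonneg v, fun h => ?_⟩
    have hx : (M x).PosSemidef := .of_dotProduct_mulVec_nonneg (hherm x) (by simpa using h)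
    exact hx.posDef_iff_det_ne_zero.2 (hdet x)
  have hclopen : IsClopen {x | (M x).PosDef} := by
    refine ⟨?_, isOpen_iff_mem_nhds.2 fun x hx => hM.eventually_posDef hherm hx⟩
    rw [hset]
    exact isClosed_iInter fun v =>
      isClosed_le continuous_const (continuous_const.dotProduct (hM.matrix_mulVec continuous_const))
  exact Set.eq_univ_iff_forall.1 (hclopen.eq_univ ⟨x₀, h₀⟩) x

end MatrixFamily

section Admissibility

variable {N : ℕ} {u : (Fin N → ℝ) → ℝ} {x : Fin N → ℝ}

theorem hess_eq_fderiv_fderiv (hu : DifferentiableAt ℝ (fderiv ℝ u) x) (i j : Fin N) :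
    hess u x i j = fderiv ℝ (fderiv ℝ u) x (Pi.single i 1) (Pi.single j 1) := by
  simp [hess, fderiv_clm_apply hu (differentiableAt_const _)]

theorem dotProduct_hess_mulVec (hu : DifferentiableAt ℝ (fderiv ℝ u) x) (v : Fin N → ℝ) :
    v ⬝ᵥ Matrix.of (hess u x) *ᵥ v = fderiv ℝ (fderiv ℝ u) x v v := by
  have : Matrix.of (hess u x) = LinearMap.toMatrix₂' ℝ (fderiv ℝ (fderiv ℝ u) x).toLinearMap₁₂ := by
    ext i j
    simp [hess_eq_fderiv_fderiv hu]
  rw [this, ← Matrix.toLinearMap₂'_apply', Matrix.toLinearMap₂'_toMatrix']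
  simp

theorem isHermitian_hess (hu : ContDiff ℝ 2 u) (x : Fin N → ℝ) :
    (Matrix.of (hess u x)).IsHermitian := by
  have hF : DifferentiableAt ℝ (fderiv ℝ u) x :=
    (hu.fderiv_right (m := 1) le_rfl).differentiable one_ne_zero x
  refine IsHermitian.ext fun i j => ?_
  simp only [of_apply, star_trivial, hess_eq_fderiv_fderiv hF]
  exact hu.contDiffAt.isSymmSndFDerivAt (by simp) _ _

theorem isHermitian_amat (hu : ContDiff ℝ 2 u) (x : Fin N → ℝ) : (amat u x).IsHermitian :=
  (isHermitian_one.add (IsHermitian.ext fun i j => by simp [mul_comm])).sub (isHermitian_hess hu x)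

theorem continuous_amat (hu : ContDiff ℝ 2 u) : Continuous (amat u) := by
  have hF : ContDiff ℝ 1 (fderiv ℝ u) := hu.fderiv_right le_rfl
  have hgrad : ∀ i, Continuous fun x => grad u x i := fun i =>
    hF.continuous.clm_apply continuous_const
  have hhess : ∀ i j, Continuous fun x => hess u x i j := fun i j => by
    simp_rw [hess_eq_fderiv_fderiv ((hF.differentiable one_ne_zero) _)]
    exact ((hF.continuous_fderiv one_ne_zero).clm_apply continuous_const).clm_apply
      continuous_const
  exact (continuous_const.add (continuous_matrix fun i j => (hgrad i).mul (hgrad j))).sub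
    (continuous_matrix fun i j => hhess i j)

theorem amat_posDef_of_isLocalMax (hu : ContDiff ℝ 2 u) (h : IsLocalMax u x) :
    (amat u x).PosDef := by
  have hF : DifferentiableAt ℝ (fderiv ℝ u) x :=
    (hu.fderiv_right (m := 1) le_rfl).differentiable one_ne_zero x
  have hA : amat u x = 1 + -Matrix.of (hess u x) := by
    ext i j
    simp [amat, grad, h.fderiv_eq_zero, sub_eq_add_neg]
  rw [hA]
  refine PosDef.one.add_posSemidef (.of_dotProduct_mulVec_nonneg (isHermitian_hess hu x).neg
    fun v => ?_)
  rw [star_trivial, neg_mulVec, dotProduct_neg, dotProduct_hess_mulVec hF, neg_nonneg]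
  exact h.fderiv_fderiv_apply_self_nonpos (hu.differentiable two_ne_zero) hF v

theorem ZPeriodic.exists_forall_ge (hper : ZPeriodic u) (hu : Continuous u) :
    ∃ x₀, ∀ x, u x ≤ u x₀ := by
  obtain ⟨x₀, -, hx₀⟩ := (isCompact_Icc (a := (0 : Fin N → ℝ)) (b := 1)).exists_isMaxOn
    (Set.nonempty_Icc.2 zero_le_one) hu.continuousOn
  refine ⟨x₀, fun x => ?_⟩
  have hx : x = (fun i => Int.fract (x i)) + fun i => ((⌊x i⌋ : ℤ) : ℝ) :=
    funext fun i => (Int.fract_add_floor (x i)).symm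
  rw [hx, hper]
  exact hx₀ ⟨fun i => Int.fract_nonneg _, fun i => (Int.fract_lt_one _).le⟩

end Admissibility

theorem stmt7_general {N : ℕ} (u : (Fin N → ℝ) → ℝ)
    (hu : ContDiff ℝ 2 u) (hper : ZPeriodic u)
    (hdet : ∀ x, 0 < (amat u x).det) :
    Admissible u := by
  obtain ⟨x₀, hx₀⟩ := hper.exists_forall_ge hu.continuous
  exact (continuous_amat hu).posDef_of_det_ne_zero (isHermitian_amat hu) (fun x => (hdet x).ne')
    (amat_posDef_of_isLocalMax hu (.of_forall hx₀))

/-- If `det A[u] > 0` everywhere for a periodic `C²` function `u`,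
then `A[u]` is positive definite everywhere, i.e. `u` is admissible. -/
theorem stmt7 {N : ℕ} (hN : 1 ≤ N) (u : (Fin N → ℝ) → ℝ)
    (hu : ContDiff ℝ 2 u) (hper : ZPeriodic u)
    (hdet : ∀ x, 0 < (amat u x).det) :
    Admissible u :=
  stmt7_general u hu hper hdet
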